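/- arXiv:2506.11359 — 8 statements merged into one kernel-verified Lean document; each statement's English description precedes it below -/
import Mathlib

section
/- There exists a distinct covering system whose least modulus is 4 and whose largest modulus is exactly 60. -/
/-!
Every modulus of `sixtyCover` divides `5040 = 2⁴·3²·5·7`, so whether an integer is covered
depends only on its residue modulo 5040, and the covering property reduces to a finite check
of the residues `0 ≤ r < 5040`.
-/

/-- A covering system: a finite set of congruences `x ≡ a (mod n)`, encoded as pairs
`(a, n) : ℤ × ℕ`, with positive moduli, such that every integer satisfies at least one
of the congruences. -/
def IsCoveringSystem (C : Finset (ℤ × ℕ)) : Prop :=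
  (∀ c ∈ C, 0 < c.2) ∧ ∀ x : ℤ, ∃ c ∈ C, x ≡ c.1 [ZMOD (c.2 : ℤ)]

/-- The moduli of the congruences in `C` are pairwise distinct. -/
def HasDistinctModuli (C : Finset (ℤ × ℕ)) : Prop :=
  ∀ c ∈ C, ∀ c' ∈ C, c ≠ c' → c.2 ≠ c'.2

/-- A distinct covering system: a covering system whose moduli are pairwise distinct
and all greater than `1`. -/
def IsDistinctCoveringSystem (C : Finset (ℤ × ℕ)) : Prop :=
  IsCoveringSystem C ∧ (∀ c ∈ C, 1 < c.2) ∧ HasDistinctModuli C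

theorem isCoveringSystem_of_forall_lt_covered {C : Finset (ℤ × ℕ)} {L : ℕ} (hL : 0 < L)
    (hdvd : ∀ c ∈ C, c.2 ∣ L) (hcover : ∀ r < L, ∃ c ∈ C, (r : ℤ) ≡ c.1 [ZMOD c.2]) :
    IsCoveringSystem C := by
  refine ⟨fun c hc => Nat.pos_of_dvd_of_pos (hdvd c hc) hL, fun x => ?_⟩
  have hL' : (0 : ℤ) < L := by exact_mod_cast hL
  obtain ⟨c, hc, hr⟩ := hcover (x % L).toNat (by have := Int.emod_lt_of_pos x hL'; omega)
  have hxr : x ≡ (x % L).toNat [ZMOD L] := by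
    rw [Int.toNat_of_nonneg (Int.emod_nonneg x hL'.ne')]
    exact (Int.mod_modEq x L).symm
  exact ⟨c, hc, (hxr.of_dvd (Int.natCast_dvd_natCast.mpr (hdvd c hc))).trans hr⟩

def sixtyCover : Finset (ℤ × ℕ) :=
  {(0, 5), (0, 6), (1, 4), (2, 7), (2, 30), (2, 40), (3, 8), (4, 9), (4, 42), (6, 14), (7, 12),
   (7, 35), (8, 10), (10, 18), (10, 28), (11, 15), (14, 20), (15, 16), (15, 24), (16, 36),
   (16, 45), (19, 21), (22, 56), (23, 48), (44, 60)}

theorem sixtyCover_moduli_dvd : ∀ c ∈ sixtyCover, c.2 ∣ 5040 := by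
  decide

-- The range `[0, 5040)` is split into 70 blocks of 72 to keep the recursion of `decide` shallow.
set_option maxRecDepth 20000 in
theorem sixtyCover_covers_blocks :
    ∀ q < 70, ∀ s < 72, ∃ c ∈ sixtyCover, ((72 * q + s : ℕ) : ℤ) ≡ c.1 [ZMOD c.2] := by
  decide

theorem sixtyCover_covers_lt (r : ℕ) (hr : r < 5040) :
    ∃ c ∈ sixtyCover, (r : ℤ) ≡ c.1 [ZMOD c.2] := by
  have h := sixtyCover_covers_blocks (r / 72) (by omega) (r % 72) (Nat.mod_lt r (by norm_num))
  rwa [Nat.div_add_mod] at h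

theorem isDistinctCoveringSystem_sixtyCover : IsDistinctCoveringSystem sixtyCover :=
  ⟨isCoveringSystem_of_forall_lt_covered (by norm_num) sixtyCover_moduli_dvd sixtyCover_covers_lt,
    by decide, by unfold HasDistinctModuli; decide⟩

/-- There exists a distinct covering system whose least modulus is `4` and whose
largest modulus is exactly `60`. -/
theorem exists_distinct_covering_min_four_max_sixty :
    ∃ C : Finset (ℤ × ℕ), IsDistinctCoveringSystem C ∧
      (∀ c ∈ C, 4 ≤ c.2) ∧ (∃ c ∈ C, c.2 = 4) ∧
      (∀ c ∈ C, c.2 ≤ 60) ∧ (∃ c ∈ C, c.2 = 60) :=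
  ⟨sixtyCover, isDistinctCoveringSystem_sixtyCover, by decide, ⟨(1, 4), by decide, rfl⟩,
    by decide, ⟨(44, 60), by decide, rfl⟩⟩
end

section
/- Let C be a covering system, let p be a prime, and let a ≥ 1 be an integer such that p^a divides L, the least common multiple of the moduli of C. Suppose that fewer than p congruences in C have modulus divisible by p^a. Then the set of congruences of C whose moduli are not divisible by p^a is still a covering system. -/
/-!
Let `Q` be the lcm of the moduli not divisible by `p^a`; then `p^a ∤ Q`. Given `x`, look at
the `p` integers `x + t Q` with `0 ≤ t < p`. Two of them differ by `(s - t) Q` with `p ∤ s - t`,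
which `p^a` does not divide, so a congruence whose modulus is a multiple of `p^a` holds for at
most one of them. As there are fewer than `p` such congruences, some `x + t Q` is covered by a
congruence with modulus dividing `Q`, and that congruence then also covers `x`.
-/

theorem Nat.Prime.exists_pow_dvd_of_pow_dvd_finset_lcm {ι : Type*} {s : Finset ι}
    {f : ι → ℕ} {p k : ℕ} (hp : p.Prime) (hk : k ≠ 0) (h : p ^ k ∣ s.lcm f) :
    ∃ i ∈ s, p ^ k ∣ f i := by
  by_cases hzero : ∃ i ∈ s, f i = 0
  · obtain ⟨i, hi, hfi⟩ := hzero
    exact ⟨i, hi, hfi ▸ dvd_zero _⟩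
  push Not at hzero
  rw [hp.pow_dvd_iff_le_factorization (Finset.lcm_ne_zero_iff.2 hzero),
    Finset.factorization_lcm hzero, Finset.le_sup_iff (Nat.pos_of_ne_zero hk)] at h
  obtain ⟨i, hi, hik⟩ := h
  exact ⟨i, hi, (hp.pow_dvd_iff_le_factorization (hzero i hi)).2 hik⟩

theorem Nat.Prime.eq_of_pow_dvd_sub_mul {p a s t : ℕ} {Q : ℤ} (hp : p.Prime)
    (hQ : ¬ (p : ℤ) ^ a ∣ Q) (hs : s < p) (ht : t < p) (h : (p : ℤ) ^ a ∣ (s - t) * Q) :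
    s = t := by
  by_contra hst
  have hndvd : ¬ (p : ℤ) ∣ s - t := fun hdvd => hst <| by
    have := Int.eq_zero_of_abs_lt_dvd hdvd (by rw [abs_lt]; omega)
    omega
  have hcop : IsCoprime ((p : ℤ) ^ a) (s - t) :=
    ((Nat.prime_iff_prime_int.1 hp).coprime_iff_not_dvd.2 hndvd).pow_left
  exact hQ (hcop.dvd_of_dvd_mul_left h)

theorem exists_shift_not_modEq {D : Finset (ℤ × ℕ)} {p a : ℕ} (hp : p.Prime)
    (hD : ∀ d ∈ D, p ^ a ∣ d.2) (hcard : D.card < p) {Q : ℤ} (hQ : ¬ (p : ℤ) ^ a ∣ Q)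
    (x : ℤ) :
    ∃ t : ℕ, ∀ d ∈ D, ¬ x + t * Q ≡ d.1 [ZMOD d.2] := by
  by_contra! hcovered
  choose! g hgD hg using fun t (_ : t ∈ Finset.range p) => hcovered t
  obtain ⟨s, hs, t, ht, hst, hgst⟩ :=
    Finset.exists_ne_map_eq_of_card_lt_of_maps_to (by simpa using hcard) hgD
  have hmod : (p : ℤ) ^ a ∣ (g t).2 := by exact_mod_cast hD _ (hgD t ht)
  have hdiff : ((g t).2 : ℤ) ∣ (s - t) * Q := by
    have hgs := hg s hs
    rw [hgst] at hgs
    have := ((hg t ht).trans hgs.symm).dvd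
    rwa [show x + s * Q - (x + t * Q) = (s - t) * Q by ring] at this
  exact hst <| hp.eq_of_pow_dvd_sub_mul hQ (Finset.mem_range.1 hs)
    (Finset.mem_range.1 ht) (hmod.trans hdiff)

theorem discard_few_multiples_general (C : Finset (ℤ × ℕ)) (hC : IsCoveringSystem C)
    (p : ℕ) (hp : p.Prime) (a : ℕ) (ha : 1 ≤ a)
    (hcard : (C.filter (fun c => p ^ a ∣ c.2)).card < p) :
    IsCoveringSystem (C.filter (fun c => ¬ p ^ a ∣ c.2)) := by
  set K := C.filter (fun c => ¬ p ^ a ∣ c.2)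
  set Q := K.lcm (fun c => c.2)
  refine ⟨fun c hc => hC.1 c (Finset.mem_filter.1 hc).1, fun x => ?_⟩
  have hQ : ¬ (p : ℤ) ^ a ∣ (Q : ℤ) := by
    intro h
    obtain ⟨c, hc, hpc⟩ := hp.exists_pow_dvd_of_pow_dvd_finset_lcm
      (Nat.one_le_iff_ne_zero.1 ha) (by exact_mod_cast h)
    exact (Finset.mem_filter.1 hc).2 hpc
  obtain ⟨t, ht⟩ :=
    exists_shift_not_modEq hp (fun d hd => (Finset.mem_filter.1 hd).2) hcard hQ x
  obtain ⟨c, hcC, hc⟩ := hC.2 (x + t * Q)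
  have hcK : c ∈ K :=
    Finset.mem_filter.2 ⟨hcC, fun hpc => ht c (Finset.mem_filter.2 ⟨hcC, hpc⟩) hc⟩
  obtain ⟨m, hm⟩ : (c.2 : ℤ) ∣ Q := by exact_mod_cast Finset.dvd_lcm hcK
  refine ⟨c, hcK, Int.ModEq.trans ?_ hc⟩
  rw [hm, mul_left_comm]
  exact Int.modEq_add_fac_self.symm

/-- If `p^a` divides the lcm `L` of the moduli of a covering system `C` and fewer
than `p` congruences of `C` have modulus divisible by `p^a`, then discarding all
congruences whose moduli are divisible by `p^a` still leaves a covering system. -/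
theorem discard_few_multiples (C : Finset (ℤ × ℕ)) (hC : IsCoveringSystem C)
    (p : ℕ) (hp : p.Prime) (a : ℕ) (ha : 1 ≤ a)
    (hdvd : p ^ a ∣ C.lcm (fun c => c.2))
    (hcard : (C.filter (fun c => p ^ a ∣ c.2)).card < p) :
    IsCoveringSystem (C.filter (fun c => ¬ p ^ a ∣ c.2)) :=
  discard_few_multiples_general C hC p hp a ha hcard
end

section
/- Let C be a distinct covering system all of whose moduli lie in the interval [c, d], where c and d are positive integers. If p is a prime and a ≥ 1 is an integer such that p^a · (p + 1) > d, then the set of congruences of C whose moduli are not multiples of p^a is still a covering system. -/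
/-!
Let `x` be an integer missed by the kept congruences and let `M` be the lcm of their moduli.
Then every term of the progression `x + tM` is missed by them too, so the discarded congruences
cover this progression. Restricted to the progression, the congruence `y ≡ r (mod n)` becomes
(at most) one residue class of `t` modulo `n / gcd(n, M)`, so the reciprocals of these reduced
moduli sum to at least `1`. But the discarded moduli are `k p^a` with `1 ≤ k ≤ p`, and since
`p^a ∤ M` each reduced modulus is divisible by `p`, and by `p^2` when `k = p`; distinctness of
the moduli then bounds the sum by `(p - 1)/p + 1/p^2 < 1`.
-/

open Finset

theorem forall_exists_add_mul_lcm_modEq {C : Finset (ℤ × ℕ)}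
    (hcov : ∀ x : ℤ, ∃ c ∈ C, x ≡ c.1 [ZMOD c.2]) (P : ℤ × ℕ → Prop) [DecidablePred P] {x : ℤ}
    (hx : ∀ c ∈ C.filter P, ¬ x ≡ c.1 [ZMOD c.2]) (t : ℤ) :
    ∃ c ∈ C.filter (¬ P ·), x + t * ((C.filter P).lcm Prod.snd : ℕ) ≡ c.1 [ZMOD c.2] := by
  obtain ⟨c, hc, hxc⟩ := hcov (x + t * ((C.filter P).lcm Prod.snd : ℕ))
  by_cases hPc : P c
  · have hcP : c ∈ C.filter P := mem_filter.2 ⟨hc, hPc⟩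
    have hdvd : (c.2 : ℤ) ∣ t * ((C.filter P).lcm Prod.snd : ℕ) :=
      (Int.natCast_dvd_natCast.2 (dvd_lcm hcP)).mul_left t
    exact absurd ((Int.modEq_iff_dvd.2 (by simpa using hdvd)).symm.trans hxc) (hx c hcP)
  · exact ⟨c, mem_filter.2 ⟨hc, hPc⟩, hxc⟩

theorem card_filter_Ico_modEq_of_dvd {m Q : ℕ} (hm : 0 < m) (hmQ : m ∣ Q) (r : ℤ) :
    #{t ∈ Ico (0 : ℤ) Q | t ≡ r [ZMOD m]} = Q / m := by
  obtain ⟨k, rfl⟩ := hmQ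
  have key := Int.Ico_filter_modEq_card 0 ((m * k : ℕ) : ℤ) (r := m) (by exact_mod_cast hm) r
  have hceil : (((m * k : ℕ) : ℤ) - r : ℚ) / ((m : ℤ) : ℚ) =
      ((0 : ℤ) - r : ℚ) / ((m : ℤ) : ℚ) + k := by
    push_cast
    field_simp
    ring
  rw [hceil, Int.ceil_add_natCast, add_sub_cancel_left, max_eq_left (by positivity)] at key
  rw [Nat.mul_div_cancel_left _ hm]
  exact_mod_cast key

theorem one_le_sum_inv_of_forall_exists_modEq {ι : Type*} (s : Finset ι) (r : ι → ℤ)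
    (m : ι → ℕ) (hm : ∀ i ∈ s, 0 < m i) (hcov : ∀ t : ℤ, ∃ i ∈ s, t ≡ r i [ZMOD m i]) :
    1 ≤ ∑ i ∈ s, ((m i : ℚ))⁻¹ := by
  classical
  set Q := s.lcm m
  have hQ : 0 < Q := Nat.pos_of_ne_zero fun h => by
    obtain ⟨i, hi, hi0⟩ := Finset.lcm_eq_zero_iff.mp h
    exact (hm i hi).ne' hi0
  have hcount : Q ≤ ∑ i ∈ s, Q / m i := calc
    Q = #(Ico (0 : ℤ) Q) := by simp
    _ ≤ #(s.biUnion fun i => {t ∈ Ico (0 : ℤ) Q | t ≡ r i [ZMOD m i]}) :=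
      card_le_card fun t ht => by
        obtain ⟨i, hi, hti⟩ := hcov t
        exact mem_biUnion.2 ⟨i, hi, mem_filter.2 ⟨ht, hti⟩⟩
    _ ≤ ∑ i ∈ s, #{t ∈ Ico (0 : ℤ) Q | t ≡ r i [ZMOD m i]} := card_biUnion_le
    _ = ∑ i ∈ s, Q / m i := sum_congr rfl fun i hi =>
      card_filter_Ico_modEq_of_dvd (hm i hi) (dvd_lcm hi) (r i)
  have hcountℚ : (Q : ℚ) * 1 ≤ Q * ∑ i ∈ s, ((m i : ℚ))⁻¹ := by
    rw [mul_one, mul_sum]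
    calc (Q : ℚ) ≤ ∑ i ∈ s, ((Q / m i : ℕ) : ℚ) := by exact_mod_cast hcount
      _ = ∑ i ∈ s, (Q : ℚ) * (m i : ℚ)⁻¹ := sum_congr rfl fun i hi => by
        rw [Nat.cast_div (dvd_lcm hi) (by exact_mod_cast (hm i hi).ne'), div_eq_mul_inv]
  exact le_of_mul_le_mul_left hcountℚ (by exact_mod_cast hQ)

theorem exists_modEq_of_add_mul_modEq (x r : ℤ) (M : ℕ) {n : ℕ} (hn : 0 < n) :
    ∃ s : ℤ, ∀ t : ℤ, x + t * M ≡ r [ZMOD n] → t ≡ s [ZMOD (n / n.gcd M : ℕ)] := by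
  by_cases h : ∃ t₀ : ℤ, x + t₀ * M ≡ r [ZMOD n]
  · obtain ⟨t₀, ht₀⟩ := h
    refine ⟨t₀, fun t ht => ?_⟩
    have hcancel := Int.ModEq.cancel_right_div_gcd (by exact_mod_cast hn)
      (Int.ModEq.add_left_cancel' x (ht.trans ht₀.symm))
    rwa [Int.gcd_natCast_natCast, ← Int.natCast_div] at hcancel
  · exact ⟨0, fun t ht => (h ⟨t, ht⟩).elim⟩

theorem one_le_sum_inv_div_gcd_of_forall_exists_add_mul_modEq (D : Finset (ℤ × ℕ))
    (hpos : ∀ c ∈ D, 0 < c.2) (x : ℤ) (M : ℕ)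
    (hcov : ∀ t : ℤ, ∃ c ∈ D, x + t * M ≡ c.1 [ZMOD c.2]) :
    1 ≤ ∑ c ∈ D, ((c.2 / c.2.gcd M : ℕ) : ℚ)⁻¹ := by
  choose! s hs using fun c (hc : c ∈ D) => exists_modEq_of_add_mul_modEq x c.1 M (hpos c hc)
  refine one_le_sum_inv_of_forall_exists_modEq D s _ (fun c hc => ?_) fun t => ?_
  · exact Nat.div_pos (Nat.gcd_le_left _ (hpos c hc)) (Nat.gcd_pos_of_pos_left _ (hpos c hc))
  · obtain ⟨c, hc, htc⟩ := hcov t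
    exact ⟨c, hc, hs c hc t htc⟩

theorem Nat.Prime.not_pow_dvd_finset_lcm {ι : Type*} {p a : ℕ} (hp : p.Prime) (ha : a ≠ 0)
    {s : Finset ι} {f : ι → ℕ} (h0 : ∀ i ∈ s, f i ≠ 0) (h : ∀ i ∈ s, ¬ p ^ a ∣ f i) :
    ¬ p ^ a ∣ s.lcm f := by
  have hlcm : s.lcm f ≠ 0 := fun hz => by
    obtain ⟨i, hi, hi0⟩ := Finset.lcm_eq_zero_iff.mp hz
    exact h0 i hi hi0
  rw [hp.pow_dvd_iff_le_factorization hlcm, Finset.factorization_lcm h0, not_le,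
    Finset.sup_lt_iff (Nat.pos_of_ne_zero ha)]
  intro i hi
  simpa [hp.pow_dvd_iff_le_factorization (h0 i hi)] using h i hi

theorem Nat.pow_succ_dvd_div_gcd {p a b n M : ℕ} (hp : p.Prime) (hn : n ≠ 0)
    (hpn : p ^ (a + b) ∣ n) (hM : ¬ p ^ a ∣ M) : p ^ (b + 1) ∣ n / n.gcd M := by
  have hgn : n.gcd M ∣ n := Nat.gcd_dvd_left n M
  have hg0 : n.gcd M ≠ 0 := Nat.gcd_ne_zero_left hn
  have hg : ¬ p ^ a ∣ n.gcd M := fun h => hM (h.trans (Nat.gcd_dvd_right n M))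
  rw [hp.pow_dvd_iff_le_factorization hn] at hpn
  rw [hp.pow_dvd_iff_le_factorization hg0] at hg
  rw [hp.pow_dvd_iff_le_factorization (Nat.div_ne_zero_iff_of_dvd hgn |>.2 ⟨hn, hg0⟩),
    Nat.factorization_div hgn, Finsupp.tsub_apply]
  omega

theorem HasDistinctModuli.subset {C C' : Finset (ℤ × ℕ)} (hC : HasDistinctModuli C)
    (h : C' ⊆ C) : HasDistinctModuli C' :=
  fun c hc c' hc' => hC c (h hc) c' (h hc')

theorem HasDistinctModuli.card_le {C : Finset (ℤ × ℕ)} (hC : HasDistinctModuli C)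
    {T : Finset ℕ} (hT : ∀ c ∈ C, c.2 ∈ T) : #C ≤ #T :=
  card_le_card_of_injOn Prod.snd hT fun c hc c' hc' h =>
    by_contra fun hne => hC c hc c' hc' hne h

theorem HasDistinctModuli.card_filter_snd_eq_le_one {C : Finset (ℤ × ℕ)}
    (hC : HasDistinctModuli C) (n : ℕ) : #(C.filter (·.2 = n)) ≤ 1 := by
  simpa using (hC.subset (filter_subset _ _)).card_le (T := {n})
    fun c hc => mem_singleton.2 (mem_filter.1 hc).2

theorem HasDistinctModuli.card_le_sub_one_of_pow_dvd {p a : ℕ} (hp : p.Prime)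
    {D : Finset (ℤ × ℕ)} (hD : HasDistinctModuli D) (hpos : ∀ c ∈ D, 0 < c.2)
    (hdvd : ∀ c ∈ D, p ^ a ∣ c.2) (hlt : ∀ c ∈ D, c.2 < p ^ a * (p + 1))
    (hne : ∀ c ∈ D, c.2 ≠ p ^ (a + 1)) : #D ≤ p - 1 := calc
  #D ≤ #((Icc 1 (p - 1)).image (p ^ a * ·)) := hD.card_le fun c hc => by
    obtain ⟨k, hk⟩ := hdvd c hc
    have hk0 : k ≠ 0 := by rintro rfl; simpa [hk] using hpos c hc
    have hkp : k < p + 1 := by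
      simpa [hk, Nat.mul_lt_mul_left (pow_pos hp.pos a)] using hlt c hc
    have hkne : k ≠ p := by rintro rfl; exact hne c hc (by rw [hk, pow_succ])
    exact mem_image.2 ⟨k, mem_Icc.2 ⟨by omega, by omega⟩, hk.symm⟩
  _ ≤ #(Icc 1 (p - 1)) := card_image_le
  _ = p - 1 := by simp

theorem inv_cast_div_gcd_le {p a b n M : ℕ} (hp : p.Prime) (hn : 0 < n)
    (hpn : p ^ (a + b) ∣ n) (hM : ¬ p ^ a ∣ M) :
    ((n / n.gcd M : ℕ) : ℚ)⁻¹ ≤ ((p : ℚ) ^ (b + 1))⁻¹ := by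
  have hdiv : 0 < n / n.gcd M := Nat.div_pos (Nat.gcd_le_left _ hn) (Nat.gcd_pos_of_pos_left _ hn)
  refine inv_anti₀ (by have := hp.pos; positivity) ?_
  exact_mod_cast Nat.le_of_dvd hdiv (Nat.pow_succ_dvd_div_gcd hp hn.ne' hpn hM)

theorem sum_inv_div_gcd_lt_one {p a M : ℕ} (hp : p.Prime) (hM : ¬ p ^ a ∣ M)
    {D : Finset (ℤ × ℕ)} (hD : HasDistinctModuli D) (hpos : ∀ c ∈ D, 0 < c.2)
    (hdvd : ∀ c ∈ D, p ^ a ∣ c.2) (hlt : ∀ c ∈ D, c.2 < p ^ a * (p + 1)) :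
    ∑ c ∈ D, ((c.2 / c.2.gcd M : ℕ) : ℚ)⁻¹ < 1 := by
  set Dtop := D.filter (·.2 = p ^ (a + 1))
  set Drest := D.filter (¬ ·.2 = p ^ (a + 1))
  have hcard_rest : #Drest ≤ p - 1 := (hD.subset (filter_subset _ _)).card_le_sub_one_of_pow_dvd
    hp (fun c hc => hpos c (mem_filter.1 hc).1) (fun c hc => hdvd c (mem_filter.1 hc).1)
    (fun c hc => hlt c (mem_filter.1 hc).1) fun c hc => (mem_filter.1 hc).2
  have hsum_top : ∑ c ∈ Dtop, ((c.2 / c.2.gcd M : ℕ) : ℚ)⁻¹ ≤ ((p : ℚ) ^ 2)⁻¹ := calc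
    _ ≤ #Dtop • ((p : ℚ) ^ 2)⁻¹ := sum_le_card_nsmul _ _ _ fun c hc =>
      inv_cast_div_gcd_le hp (hpos c (mem_filter.1 hc).1) (by rw [(mem_filter.1 hc).2]) hM
    _ ≤ ((p : ℚ) ^ 2)⁻¹ := by
      rw [nsmul_eq_mul]
      exact mul_le_of_le_one_left (by positivity)
        (by exact_mod_cast hD.card_filter_snd_eq_le_one _)
  have hsum_rest :
      ∑ c ∈ Drest, ((c.2 / c.2.gcd M : ℕ) : ℚ)⁻¹ ≤ ((p : ℚ) - 1) * (p : ℚ)⁻¹ := calc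
    _ ≤ #Drest • (p : ℚ)⁻¹ := sum_le_card_nsmul _ _ _ fun c hc => by
      simpa using inv_cast_div_gcd_le (b := 0) hp (hpos c (mem_filter.1 hc).1)
        (by simpa using hdvd c (mem_filter.1 hc).1) hM
    _ ≤ ((p : ℚ) - 1) * (p : ℚ)⁻¹ := by
      rw [nsmul_eq_mul]
      gcongr
      rw [← Nat.cast_one, ← Nat.cast_sub hp.one_le]
      exact_mod_cast hcard_rest
  have hp2 : (2 : ℚ) ≤ p := by exact_mod_cast hp.two_le
  rw [← sum_filter_add_sum_filter_not D (·.2 = p ^ (a + 1))]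
  calc _ ≤ ((p : ℚ) ^ 2)⁻¹ + ((p : ℚ) - 1) * (p : ℚ)⁻¹ := add_le_add hsum_top hsum_rest
    _ < 1 := by
      field_simp
      nlinarith

theorem krukenberg_discard_general (C : Finset (ℤ × ℕ)) (hC : IsDistinctCoveringSystem C)
    (c d : ℕ)
    (hmod : ∀ x ∈ C, c ≤ x.2 ∧ x.2 ≤ d)
    (p : ℕ) (hp : p.Prime) (a : ℕ) (ha : 1 ≤ a)
    (h : d < p ^ a * (p + 1)) :
    IsCoveringSystem (C.filter (fun x => ¬ p ^ a ∣ x.2)) := by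
  obtain ⟨⟨hpos, hcov⟩, -, hdist⟩ := hC
  refine ⟨fun i hi => hpos i (mem_filter.1 hi).1, fun x => ?_⟩
  by_contra! hx
  have hM : ¬ p ^ a ∣ (C.filter (fun x => ¬ p ^ a ∣ x.2)).lcm Prod.snd :=
    hp.not_pow_dvd_finset_lcm (by omega) (fun i hi => (hpos i (mem_filter.1 hi).1).ne')
      fun i hi => (mem_filter.1 hi).2
  have hcover := forall_exists_add_mul_lcm_modEq hcov (fun x => ¬ p ^ a ∣ x.2) hx
  have hge := one_le_sum_inv_div_gcd_of_forall_exists_add_mul_modEq _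
    (fun i hi => hpos i (mem_filter.1 hi).1) x _ hcover
  have hlt := sum_inv_div_gcd_lt_one hp hM (hdist.subset (filter_subset _ _))
    (fun i hi => hpos i (mem_filter.1 hi).1) (fun i hi => not_not.1 (mem_filter.1 hi).2)
    fun i hi => ((hmod i (mem_filter.1 hi).1).2.trans_lt h)
  exact hge.not_gt hlt

/-- Krukenberg: if all moduli of a distinct covering system lie in `[c, d]` and
`p^a (p + 1) > d` for a prime `p` and `a ≥ 1`, then discarding all congruences whose
moduli are multiples of `p^a` still leaves a covering system. -/
theorem krukenberg_discard (C : Finset (ℤ × ℕ)) (hC : IsDistinctCoveringSystem C)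
    (c d : ℕ) (hc : 0 < c) (hd : 0 < d)
    (hmod : ∀ x ∈ C, c ≤ x.2 ∧ x.2 ≤ d)
    (p : ℕ) (hp : p.Prime) (a : ℕ) (ha : 1 ≤ a)
    (h : d < p ^ a * (p + 1)) :
    IsCoveringSystem (C.filter (fun x => ¬ p ^ a ∣ x.2)) :=
  krukenberg_discard_general C hC c d hmod p hp a ha h
end

section
/- Let C be a covering system, let p be a prime and a ≥ 1 an integer such that p^a exactly divides L (i.e., p^a divides L but p^(a+1) does not), where L is the least common multiple of the moduli of C. Suppose exactly p congruences of C have modulus divisible by p^a, and that these congruences have moduli p^a·m_1, …, p^a·m_p (so that p does not divide any m_i). Then there exists an integer b such that the set obtained from C by deleting these p congruences and adding the single congruence x ≡ b (mod p^(a−1)·lcm(m_1, …, m_p)) is still a covering system. -/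
/-!
Write `L = p^a K` with `p ∤ K`. Every modulus not divisible by `p^a` divides `Q = p^(a-1) K`, so
if `x` is not covered by those congruences, neither is any of `x, x + Q, …, x + (p-1) Q`; each of
these `p` integers is then covered by one of the `p` remaining congruences. No congruence with
modulus divisible by `p^a` covers two of them, because `p^a ∣ (i - j) Q` forces `p ∣ i - j`, so
every remaining congruence `c` covers some `x + j Q`. Since `p^(a-1) (c.2 / p^a)` divides both
`c.2` and `Q`, this gives `x ≡ c.1` modulo it. Hence all the integers left uncovered by the
congruences with modulus not divisible by `p^a` are congruent modulo `p^(a-1) lcm(m₁, …, m_p)`,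
and one congruence with that modulus covers all of them.
-/

open Finset

theorem Finset.forall_exists_rel_of_card_le {ι α : Type*} {s : Finset ι} {t : Finset α}
    (R : ι → α → Prop) (hst : #t ≤ #s) (hex : ∀ i ∈ s, ∃ c ∈ t, R i c)
    (hinj : ∀ c ∈ t, ∀ i ∈ s, ∀ j ∈ s, R i c → R j c → i = j) :
    ∀ c ∈ t, ∃ i ∈ s, R i c := by
  choose f hft hf using hex
  intro c hc
  obtain ⟨i, hi, rfl⟩ := surj_on_of_inj_on_of_card_le f hft
    (fun i j hi hj hij => hinj _ (hft i hi) i hi j hj (hf i hi) (hij ▸ hf j hj)) hst c hc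
  exact ⟨i, hi, hf i hi⟩

theorem Nat.dvd_pow_pred_mul_of_not_pow_dvd {p a n K : ℕ} (hp : p.Prime)
    (hn : n ∣ p ^ a * K) (hna : ¬ p ^ a ∣ n) : n ∣ p ^ (a - 1) * K := by
  have hn0 : n ≠ 0 := by
    rintro rfl
    exact hna (dvd_zero _)
  have hv : n.factorization p ≤ a - 1 := by
    by_contra! h
    exact hna ((pow_dvd_pow p (by omega)).trans (Nat.ordProj_dvd n p))
  have hm : n / p ^ n.factorization p ∣ K :=
    ((Nat.coprime_ordCompl hp hn0).symm.pow_right a).dvd_of_dvd_mul_left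
      ((Nat.ordCompl_dvd n p).trans hn)
  rw [← Nat.ordProj_mul_ordCompl_eq_self n p]
  exact mul_dvd_mul (pow_dvd_pow p hv) hm

theorem Nat.eq_of_mul_modEq_mul_pow {p a K i j : ℕ} (hp : p.Prime) (ha : 1 ≤ a) (hK : ¬ p ∣ K)
    (hi : i < p) (hj : j < p)
    (h : i * (p ^ (a - 1) * K) ≡ j * (p ^ (a - 1) * K) [MOD p ^ a]) : i = j := by
  have hpa : p ^ a = p ^ (a - 1) * p := by rw [← pow_succ, Nat.sub_add_cancel ha]
  have hmodp : i * K ≡ j * K [MOD p] := by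
    refine Nat.ModEq.mul_left_cancel' (c := p ^ (a - 1)) (pow_ne_zero _ hp.ne_zero) ?_
    rw [← hpa]
    convert h using 1 <;> ring
  exact (hmodp.cancel_right_of_coprime (hp.coprime_iff_not_dvd.2 hK)).eq_of_lt_of_lt hi hj

theorem Int.add_mul_modEq_of_dvd {n Q : ℤ} (h : n ∣ Q) (x k : ℤ) : x + k * Q ≡ x [ZMOD n] := by
  obtain ⟨t, rfl⟩ := h
  rw [mul_left_comm]
  exact Int.modEq_add_fac_self

def Covers (T : Finset (ℤ × ℕ)) (x : ℤ) : Prop :=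
  ∃ c ∈ T, x ≡ c.1 [ZMOD c.2]

theorem covers_add_mul_iff {T : Finset (ℤ × ℕ)} {Q : ℤ} (hT : ∀ c ∈ T, (c.2 : ℤ) ∣ Q)
    (x k : ℤ) : Covers T (x + k * Q) ↔ Covers T x := by
  have hper : ∀ c ∈ T, x + k * Q ≡ x [ZMOD c.2] := fun c hc =>
    Int.add_mul_modEq_of_dvd (hT c hc) x k
  unfold Covers
  exact exists_congr fun c =>
    and_congr_right fun hc => ⟨(hper c hc).symm.trans, (hper c hc).trans⟩

theorem exists_isCoveringSystem_insert {T : Finset (ℤ × ℕ)} (hT : ∀ c ∈ T, 0 < c.2) {N : ℕ}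
    (hN : 0 < N) (h : ∀ x y, ¬ Covers T x → ¬ Covers T y → x ≡ y [ZMOD N]) :
    ∃ b : ℤ, IsCoveringSystem (insert (b, N) T) := by
  obtain ⟨b, hb⟩ : ∃ b, ∀ x, ¬ Covers T x → x ≡ b [ZMOD N] := by
    by_cases hall : ∃ y, ¬ Covers T y
    · obtain ⟨y, hy⟩ := hall
      exact ⟨y, fun x hx => h x y hx hy⟩
    · push Not at hall
      exact ⟨0, fun x hx => absurd (hall x) hx⟩
  refine ⟨b, forall_mem_insert _ _ _ |>.2 ⟨hN, hT⟩, fun x => ?_⟩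
  by_cases hx : Covers T x
  · obtain ⟨c, hc, hxc⟩ := hx
    exact ⟨c, mem_insert_of_mem hc, hxc⟩
  · exact ⟨(b, N), mem_insert_self _ _, hb x hx⟩

section Replace

variable {C : Finset (ℤ × ℕ)} {p a K : ℕ}

theorem lcm_div_pow_dvd (hp : 0 < p) (hCK : ∀ c ∈ C, c.2 ∣ p ^ a * K) :
    (C.filter (fun c => p ^ a ∣ c.2)).lcm (fun c => c.2 / p ^ a) ∣ K :=
  Finset.lcm_dvd fun c hc =>
    (Nat.div_dvd_iff_dvd_mul (mem_filter.1 hc).2 (pow_pos hp a)).2 (hCK c (mem_filter.1 hc).1)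

theorem exists_shift_modEq_of_not_covers (hC : IsCoveringSystem C) (hp : p.Prime) (ha : 1 ≤ a)
    (hK : ¬ p ∣ K) (hCK : ∀ c ∈ C, c.2 ∣ p ^ a * K)
    (hcard : #(C.filter (fun c => p ^ a ∣ c.2)) ≤ p) {x : ℤ}
    (hx : ¬ Covers (C.filter (fun c => ¬ p ^ a ∣ c.2)) x) :
    ∀ c ∈ C.filter (fun c => p ^ a ∣ c.2),
      ∃ j ∈ range p, x + j * (p ^ (a - 1) * K : ℕ) ≡ c.1 [ZMOD c.2] := by
  have hTQ : ∀ c ∈ C.filter (fun c => ¬ p ^ a ∣ c.2), (c.2 : ℤ) ∣ (p ^ (a - 1) * K : ℕ) :=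
    fun c hc => Int.natCast_dvd_natCast.2 <|
      Nat.dvd_pow_pred_mul_of_not_pow_dvd hp (hCK c (mem_filter.1 hc).1) (mem_filter.1 hc).2
  have hshift : ∀ j ∈ range p, ∃ c ∈ C.filter (fun c => p ^ a ∣ c.2),
      x + j * (p ^ (a - 1) * K : ℕ) ≡ c.1 [ZMOD c.2] := by
    intro j _
    obtain ⟨c, hc, hxc⟩ := hC.2 (x + j * (p ^ (a - 1) * K : ℕ))
    by_cases hpc : p ^ a ∣ c.2
    · exact ⟨c, mem_filter.2 ⟨hc, hpc⟩, hxc⟩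
    · exact absurd ((covers_add_mul_iff hTQ x j).1 ⟨c, mem_filter.2 ⟨hc, hpc⟩, hxc⟩) hx
  refine forall_exists_rel_of_card_le _ (by simpa using hcard) hshift ?_
  intro c hc i hi j hj hci hcj
  refine Nat.eq_of_mul_modEq_mul_pow hp ha hK (mem_range.1 hi) (mem_range.1 hj) ?_
  exact_mod_cast ((hci.trans hcj.symm).add_left_cancel' x).of_dvd
    (Int.natCast_dvd_natCast.2 (mem_filter.1 hc).2)

theorem modEq_of_not_covers (hC : IsCoveringSystem C) (hp : p.Prime) (ha : 1 ≤ a)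
    (hK : ¬ p ∣ K) (hCK : ∀ c ∈ C, c.2 ∣ p ^ a * K)
    (hcard : #(C.filter (fun c => p ^ a ∣ c.2)) ≤ p) {x : ℤ}
    (hx : ¬ Covers (C.filter (fun c => ¬ p ^ a ∣ c.2)) x) :
    ∀ c ∈ C.filter (fun c => p ^ a ∣ c.2), x ≡ c.1 [ZMOD (p ^ (a - 1) * (c.2 / p ^ a) : ℕ)] := by
  intro c hc
  obtain ⟨j, -, hj⟩ := exists_shift_modEq_of_not_covers hC hp ha hK hCK hcard hx c hc
  have hdc : p ^ (a - 1) * (c.2 / p ^ a) ∣ c.2 :=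
    calc p ^ (a - 1) * (c.2 / p ^ a) ∣ p ^ a * (c.2 / p ^ a) :=
          mul_dvd_mul_right (pow_dvd_pow p (Nat.sub_le a 1)) _
      _ = c.2 := Nat.mul_div_cancel' (mem_filter.1 hc).2
  have hdQ : p ^ (a - 1) * (c.2 / p ^ a) ∣ p ^ (a - 1) * K :=
    mul_dvd_mul_left _ ((Finset.dvd_lcm hc).trans (lcm_div_pow_dvd hp.pos hCK))
  calc x ≡ x + j * (p ^ (a - 1) * K : ℕ) [ZMOD (p ^ (a - 1) * (c.2 / p ^ a) : ℕ)] :=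
        (Int.add_mul_modEq_of_dvd (Int.natCast_dvd_natCast.2 hdQ) x j).symm
    _ ≡ c.1 [ZMOD (p ^ (a - 1) * (c.2 / p ^ a) : ℕ)] :=
        hj.of_dvd (Int.natCast_dvd_natCast.2 hdc)

theorem modEq_of_not_covers_of_not_covers (hC : IsCoveringSystem C) (hp : p.Prime) (ha : 1 ≤ a)
    (hK : ¬ p ∣ K) (hCK : ∀ c ∈ C, c.2 ∣ p ^ a * K)
    (hcard : #(C.filter (fun c => p ^ a ∣ c.2)) ≤ p)
    (hS : (C.filter (fun c => p ^ a ∣ c.2)).Nonempty) {x y : ℤ}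
    (hx : ¬ Covers (C.filter (fun c => ¬ p ^ a ∣ c.2)) x)
    (hy : ¬ Covers (C.filter (fun c => ¬ p ^ a ∣ c.2)) y) :
    x ≡ y [ZMOD
      (p ^ (a - 1) * (C.filter (fun c => p ^ a ∣ c.2)).lcm (fun c => c.2 / p ^ a) : ℕ)] := by
  have hxy : ∀ c ∈ C.filter (fun c => p ^ a ∣ c.2),
      x ≡ y [ZMOD (p ^ (a - 1) * (c.2 / p ^ a) : ℕ)] := fun c hc =>
    (modEq_of_not_covers hC hp ha hK hCK hcard hx c hc).trans
      (modEq_of_not_covers hC hp ha hK hCK hcard hy c hc).symm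
  have hcop : (p ^ (a - 1)).Coprime
      ((C.filter (fun c => p ^ a ∣ c.2)).lcm (fun c => c.2 / p ^ a)) :=
    (hp.coprime_iff_not_dvd.2 fun h => hK (h.trans (lcm_div_pow_dvd hp.pos hCK))).pow_left _
  rw [Nat.cast_mul, ← Int.modEq_and_modEq_iff_modEq_mul (by simpa using hcop)]
  obtain ⟨c₀, hc₀⟩ := hS
  refine ⟨(hxy c₀ hc₀).of_dvd (by push_cast; exact dvd_mul_right _ _), ?_⟩
  refine Int.modEq_iff_dvd.2 (Int.natCast_dvd.2 (Finset.lcm_dvd fun c hc => ?_))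
  exact Int.natCast_dvd.1 <| Int.modEq_iff_dvd.1 <|
    (hxy c hc).of_dvd (by push_cast; exact dvd_mul_left _ _)

end Replace

/-- Krukenberg: suppose `p^a` exactly divides the lcm `L` of the moduli of a covering
system `C`, and exactly `p` congruences of `C` have modulus divisible by `p^a`, with
moduli `p^a m₁, …, p^a m_p`. Then these `p` congruences can be replaced by a single
congruence with modulus `p^(a-1) lcm(m₁, …, m_p)` and the result is still a covering
system. -/
theorem replace_p_congruences (C : Finset (ℤ × ℕ)) (hC : IsCoveringSystem C)
    (p : ℕ) (hp : p.Prime) (a : ℕ) (ha : 1 ≤ a)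
    (h1 : p ^ a ∣ C.lcm (fun c => c.2))
    (h2 : ¬ p ^ (a + 1) ∣ C.lcm (fun c => c.2))
    (hcard : (C.filter (fun c => p ^ a ∣ c.2)).card = p) :
    ∃ b : ℤ, IsCoveringSystem
      (insert
        (b, p ^ (a - 1) * (C.filter (fun c => p ^ a ∣ c.2)).lcm (fun c => c.2 / p ^ a))
        (C.filter (fun c => ¬ p ^ a ∣ c.2))) := by
  obtain ⟨K, hLK⟩ := h1
  have hK : ¬ p ∣ K := fun hpK => h2 (hLK ▸ pow_succ p a ▸ mul_dvd_mul_left _ hpK)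
  have hCK : ∀ c ∈ C, c.2 ∣ p ^ a * K := fun c hc => hLK ▸ Finset.dvd_lcm hc
  have hS : (C.filter (fun c => p ^ a ∣ c.2)).Nonempty :=
    card_pos.1 (by rw [hcard]; exact hp.pos)
  have hN : 0 < p ^ (a - 1) * (C.filter (fun c => p ^ a ∣ c.2)).lcm (fun c => c.2 / p ^ a) :=
    Nat.mul_pos (pow_pos hp.pos _) <| Nat.pos_of_dvd_of_pos (lcm_div_pow_dvd hp.pos hCK)
      (Nat.pos_of_ne_zero fun hK0 => hK (hK0 ▸ dvd_zero p))
  exact exists_isCoveringSystem_insert (fun c hc => hC.1 c (mem_filter.1 hc).1) hN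
    fun x y hx hy => modEq_of_not_covers_of_not_covers hC hp ha hK hCK hcard.le hS hx hy
end

section
/- Let C be a covering system, let p be a prime and a ≥ 1 an integer such that p^a exactly divides L (i.e., p^a divides L but p^(a+1) does not), where L is the least common multiple of the moduli of C. Suppose exactly p congruences of C have modulus divisible by p^a. If two of these p congruences have residues lying in the same residue class modulo p^a, then the set obtained from C by deleting all p of these congruences is still a covering system. -/
/-!
Write `L = p^a m` with `p ∤ m`. Every modulus not divisible by `p^a` divides `p^(a-1) m`,
so it suffices to find, for each `x`, some `y ≡ x (mod p^(a-1) m)` that none of the `p`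
discarded congruences covers. The numbers `x + t p^(a-1) m`, `0 ≤ t < p`, lie in `p` distinct
classes modulo `p^a`, while the discarded congruences occupy fewer than `p` such classes
because two of them share one.
-/

theorem IsCoveringSystem.filter_not_of_forall_exists_uncovered {C : Finset (ℤ × ℕ)}
    (hC : IsCoveringSystem C) (P : ℤ × ℕ → Prop) [DecidablePred P] (M : ℤ)
    (hdvd : ∀ c ∈ C, ¬ P c → (c.2 : ℤ) ∣ M)
    (huncovered :
      ∀ x : ℤ, ∃ y, y ≡ x [ZMOD M] ∧ ∀ c ∈ C, P c → ¬ y ≡ c.1 [ZMOD c.2]) :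
    IsCoveringSystem (C.filter fun c => ¬ P c) := by
  refine ⟨fun c hc => hC.1 c (Finset.mem_filter.mp hc).1, fun x => ?_⟩
  obtain ⟨y, hyx, hy⟩ := huncovered x
  obtain ⟨c, hc, hyc⟩ := hC.2 y
  have hP : ¬ P c := fun hP => hy c hc hP hyc
  exact ⟨c, Finset.mem_filter.mpr ⟨hc, hP⟩, ((hyx.of_dvd (hdvd c hc hP)).symm.trans hyc)⟩

theorem Nat.dvd_pow_mul_of_dvd_pow_succ_mul {p n k m : ℕ} (hp : p.Prime)
    (hn : n ∣ p ^ (k + 1) * m) (hpn : ¬ p ^ (k + 1) ∣ n) : n ∣ p ^ k * m := by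
  obtain ⟨d, e, hd, he, rfl⟩ := Nat.dvd_mul.mp hn
  obtain ⟨i, hi, rfl⟩ := (Nat.dvd_prime_pow hp).mp hd
  have hik : i ≤ k := by
    by_contra! hki
    exact hpn (Dvd.intro _ (by rw [show i = k + 1 by omega]))
  exact mul_dvd_mul (Nat.pow_dvd_pow p hik) he

theorem Int.injOn_add_mul_pow_emod_pow_succ {p : ℕ} (hp : p.Prime) {u : ℤ}
    (hu : ¬ (p : ℤ) ∣ u) (x : ℤ) (k : ℕ) :
    Set.InjOn (fun t : ℕ => (x + t * (p ^ k * u)) % (p : ℤ) ^ (k + 1)) (Finset.range p) := by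
  intro t ht t' ht' htt'
  have hdvd : (p : ℤ) ^ k * p ∣ p ^ k * ((t' - t) * u) := by
    rw [← pow_succ]
    convert (Int.ModEq.dvd htt') using 1
    ring
  have hpk : (p : ℤ) ^ k ≠ 0 := pow_ne_zero _ (by exact_mod_cast hp.ne_zero)
  have hpt : (p : ℤ) ∣ (t' : ℤ) - t :=
    ((Nat.prime_iff_prime_int.mp hp).dvd_or_dvd
      ((mul_dvd_mul_iff_left hpk).mp hdvd)).resolve_right hu
  simp only [Finset.coe_range, Set.mem_Iio] at ht ht'
  exact Nat.ModEq.eq_of_lt_of_lt ((Nat.modEq_iff_dvd).mpr hpt) ht ht'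

theorem Int.exists_add_mul_pow_emod_pow_succ_notMem {p : ℕ} (hp : p.Prime) {u : ℤ}
    (hu : ¬ (p : ℤ) ∣ u) (x : ℤ) (k : ℕ) {T : Finset ℤ} (hT : T.card < p) :
    ∃ t : ℕ, (x + t * (p ^ k * u)) % (p : ℤ) ^ (k + 1) ∉ T := by
  by_contra! hall
  have := Finset.card_le_card_of_injOn _ (fun t _ => hall t)
    (Int.injOn_add_mul_pow_emod_pow_succ hp hu x k)
  simp only [Finset.card_range] at this
  omega

theorem Finset.card_image_lt_of_not_injOn {α β : Type*} [DecidableEq β] {s : Finset α}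
    {f : α → β} (h : ∃ a ∈ s, ∃ b ∈ s, a ≠ b ∧ f a = f b) :
    (s.image f).card < s.card := by
  obtain ⟨a, ha, b, hb, hab, hf⟩ := h
  refine lt_of_le_of_ne Finset.card_image_le fun heq => hab ?_
  exact Finset.card_image_iff.mp heq ha hb hf

/-- Krukenberg: suppose `p^a` exactly divides the lcm `L` of the moduli of a covering
system `C`, and exactly `p` congruences of `C` have modulus divisible by `p^a`. If two
of these `p` congruences are in the same residue class modulo `p^a`, then discarding
all `p` of them still leaves a covering system. -/
theorem discard_p_congruences (C : Finset (ℤ × ℕ)) (hC : IsCoveringSystem C)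
    (p : ℕ) (hp : p.Prime) (a : ℕ) (ha : 1 ≤ a)
    (h1 : p ^ a ∣ C.lcm (fun c => c.2))
    (h2 : ¬ p ^ (a + 1) ∣ C.lcm (fun c => c.2))
    (hcard : (C.filter (fun c => p ^ a ∣ c.2)).card = p)
    (hsame : ∃ c₁ ∈ C.filter (fun c => p ^ a ∣ c.2),
      ∃ c₂ ∈ C.filter (fun c => p ^ a ∣ c.2),
        c₁ ≠ c₂ ∧ c₁.1 ≡ c₂.1 [ZMOD ((p : ℤ) ^ a)]) :
    IsCoveringSystem (C.filter (fun c => ¬ p ^ a ∣ c.2)) := by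
  obtain ⟨k, rfl⟩ := Nat.exists_eq_add_of_le' ha
  obtain ⟨m, hm⟩ := h1
  have hpm : ¬ (p : ℤ) ∣ m := fun h =>
    h2 (hm ▸ pow_succ p (k + 1) ▸ mul_dvd_mul_left _ (Int.natCast_dvd_natCast.mp h))
  have hT :=
    Finset.card_image_lt_of_not_injOn (f := fun c : ℤ × ℕ => c.1 % (p : ℤ) ^ (k + 1)) hsame
  rw [hcard] at hT
  refine hC.filter_not_of_forall_exists_uncovered _ (p ^ k * m : ℕ)
    (fun c hc hpc => ?_) fun x => ?_
  · exact Int.natCast_dvd_natCast.mpr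
      (Nat.dvd_pow_mul_of_dvd_pow_succ_mul hp (hm ▸ Finset.dvd_lcm hc) hpc)
  · obtain ⟨t, ht⟩ := Int.exists_add_mul_pow_emod_pow_succ_notMem hp hpm x k hT
    refine ⟨x + t * (p ^ k * m), ?_, fun c hc hpc hyc => ht ?_⟩
    · exact (Int.modEq_iff_dvd.mpr ⟨t, by push_cast; ring⟩).symm
    · have hdvd : (p : ℤ) ^ (k + 1) ∣ c.2 := by exact_mod_cast hpc
      exact Finset.mem_image.mpr
        ⟨c, Finset.mem_filter.mpr ⟨hc, hpc⟩, (hyc.of_dvd hdvd).symm⟩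
end

section
/- Let C be a covering system, let p be a prime, and let r be an integer with 0 ≤ r ≤ p − 1. Then for every integer y, at least one of the following holds: (1) there is a congruence x ≡ a (mod n) in C with p ∤ n such that p·y ≡ a − r (mod n) (which, since p is invertible modulo n, is a single congruence condition on y modulo n), or (2) there is a congruence x ≡ a (mod n) in C with p | n and a ≡ r (mod p) such that y ≡ (a − r)/p (mod n/p). In particular, the congruences on y arising in (1) (one for each congruence of C with modulus coprime to p, with the same modulus n) together with those arising in (2) (one for each congruence of C with modulus divisible by p and residue congruent to r modulo p, with modulus n/p) form a covering system. -/
/-!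
A witness for `y` is a congruence `x ≡ a (mod n)` of `C` satisfied by `x = p y + r`.
When `p ∣ n`, reducing it mod `p` gives `a ≡ r (mod p)`, and cancelling the factor `p` from
`p y ≡ a - r (mod p · n/p)` gives `y ≡ (a - r)/p (mod n/p)`.
-/

namespace Int.ModEq

variable {p n a b r y : ℤ}

theorem modEq_sub_of_add_modEq (h : b + r ≡ a [ZMOD n]) : b ≡ a - r [ZMOD n] := by
  simpa using h.sub_right r

theorem modEq_of_mul_add_modEq (hpn : p ∣ n) (h : p * y + r ≡ a [ZMOD n]) : a ≡ r [ZMOD p] :=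
  (Int.modulus_mul_add_modEq_iff.mp (h.of_dvd hpn)).symm

theorem modEq_ediv_of_mul_modEq (hp : p ≠ 0) (hb : p ∣ b) (h : p * y ≡ b [ZMOD p * n]) :
    y ≡ b / p [ZMOD n] :=
  Int.ModEq.mul_left_cancel' hp (by rwa [Int.mul_ediv_cancel' hb])

theorem modEq_ediv_of_mul_add_modEq (hp : p ≠ 0) (hpn : p ∣ n) (h : p * y + r ≡ a [ZMOD n]) :
    y ≡ (a - r) / p [ZMOD n / p] :=
  modEq_ediv_of_mul_modEq hp (h.modEq_of_mul_add_modEq hpn).symm.dvd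
    (by rw [Int.mul_ediv_cancel' hpn]; exact h.modEq_sub_of_add_modEq)

end Int.ModEq

theorem reduce_mod_p_general (C : Finset (ℤ × ℕ)) (hC : IsCoveringSystem C)
    (p : ℕ) (r : ℤ) (y : ℤ) :
    (∃ c ∈ C, ¬ p ∣ c.2 ∧ (p : ℤ) * y ≡ c.1 - r [ZMOD (c.2 : ℤ)]) ∨
    (∃ c ∈ C, p ∣ c.2 ∧ c.1 ≡ r [ZMOD (p : ℤ)] ∧
      y ≡ (c.1 - r) / (p : ℤ) [ZMOD ((c.2 / p : ℕ) : ℤ)]) := by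
  obtain ⟨hpos, hcov⟩ := hC
  obtain ⟨c, hcC, hc⟩ := hcov ((p : ℤ) * y + r)
  by_cases hpn : p ∣ c.2
  · have hp : (p : ℤ) ≠ 0 :=
      Int.natCast_ne_zero.mpr (ne_zero_of_dvd_ne_zero (hpos c hcC).ne' hpn)
    have hpn' : (p : ℤ) ∣ c.2 := Int.natCast_dvd_natCast.mpr hpn
    refine .inr ⟨c, hcC, hpn, hc.modEq_of_mul_add_modEq hpn', ?_⟩
    rw [Int.natCast_div]
    exact hc.modEq_ediv_of_mul_add_modEq hp hpn'
  · exact .inl ⟨c, hcC, hpn, hc.modEq_sub_of_add_modEq⟩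

/-- Reducing a covering system modulo a prime `p`: substituting `x = p y + r`, every
integer `y` satisfies either a congruence coming from a modulus coprime to `p`
(namely `p y ≡ a - r (mod n)`), or a congruence coming from a modulus divisible by `p`
whose residue is `≡ r (mod p)` (namely `y ≡ (a - r)/p (mod n/p)`). -/
theorem reduce_mod_p (C : Finset (ℤ × ℕ)) (hC : IsCoveringSystem C)
    (p : ℕ) (hp : p.Prime) (r : ℤ) (hr0 : 0 ≤ r) (hr1 : r ≤ (p : ℤ) - 1) (y : ℤ) :
    (∃ c ∈ C, ¬ p ∣ c.2 ∧ (p : ℤ) * y ≡ c.1 - r [ZMOD (c.2 : ℤ)]) ∨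
    (∃ c ∈ C, p ∣ c.2 ∧ c.1 ≡ r [ZMOD (p : ℤ)] ∧
      y ≡ (c.1 - r) / (p : ℤ) [ZMOD ((c.2 / p : ℕ) : ℤ)]) :=
  reduce_mod_p_general C hC p r y
end

section
/- Let m ≥ 3 be an integer and let C be a minimal distinct covering system all of whose moduli lie in the interval [m, 10m], i.e., a distinct covering system no proper subset of which is a covering system. Then every prime divisor of every modulus of C is less than √(9m + 1). -/
/-! Suppose a prime `q` with `q² ≥ 9m + 1` divides a modulus, and let `S` be the congruences
whose moduli are multiples of `q`. These moduli are distinct multiples of `q` in an interval of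
length `9m < q²`, so there are at most `q` of them, and exactly `q` only if one of them is
divisible by `q²`. Either way some residue class modulo `q²` meets no congruence of `S`: if
fewer than `q` residues modulo `q` occur among the congruences of `S`, take a missing one;
otherwise the congruence `a (mod n)` with `q² ∣ n` is the only one meeting `a (mod q)`, and it
misses `a + q (mod q²)`. The other congruences have moduli prime to `q`, so by the Chinese
remainder theorem covering that class means covering `ℤ`, against minimality. -/

lemma HasDistinctModuli.injOn_snd {C : Finset (ℤ × ℕ)} (hC : HasDistinctModuli C) :
    Set.InjOn Prod.snd (C : Set (ℤ × ℕ)) :=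
  fun c hc c' hc' h => by_contra fun hne => hC c hc c' hc' hne h

lemma isCoveringSystem_of_covers_residueClass {D : Finset (ℤ × ℕ)}
    (hpos : ∀ c ∈ D, 0 < c.2) {M : ℕ} (hcop : ∀ c ∈ D, Nat.Coprime c.2 M) (r : ℤ)
    (hcov : ∀ x, x ≡ r [ZMOD M] → ∃ c ∈ D, x ≡ c.1 [ZMOD c.2]) :
    IsCoveringSystem D := by
  refine ⟨hpos, fun x => ?_⟩
  set N := ∏ c ∈ D, c.2
  obtain ⟨u, v, huv⟩ : IsCoprime (M : ℤ) N :=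
    Nat.isCoprime_iff_coprime.mpr (Nat.Coprime.prod_right fun c hc => (hcop c hc).symm)
  set y := x + (r - x) * v * N
  have hyr : y ≡ r [ZMOD M] :=
    Int.modEq_iff_dvd.mpr ⟨(r - x) * u, by linear_combination (x - r) * huv⟩
  have hyx : y ≡ x [ZMOD N] := Int.modEq_iff_dvd.mpr ⟨-(r - x) * v, by ring⟩
  obtain ⟨c, hc, hyc⟩ := hcov y hyr
  have hcN : (c.2 : ℤ) ∣ N := Int.natCast_dvd_natCast.mpr (Finset.dvd_prod_of_mem _ hc)
  exact ⟨c, hc, ((hyx.of_dvd hcN).symm.trans hyc)⟩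

def MissesResidueClass (S : Finset (ℤ × ℕ)) (M : ℕ) (r : ℤ) : Prop :=
  ∀ x, x ≡ r [ZMOD M] → ∀ c ∈ S, ¬ x ≡ c.1 [ZMOD c.2]

lemma MissesResidueClass.of_dvd {S : Finset (ℤ × ℕ)} {M M' : ℕ} {r : ℤ}
    (h : MissesResidueClass S M r) (hM : M ∣ M') : MissesResidueClass S M' r :=
  fun x hx => h x (hx.of_dvd (Int.natCast_dvd_natCast.mpr hM))

section MultiplesOfPrime

variable {q : ℕ} {S : Finset (ℤ × ℕ)}

lemma exists_missesResidueClass_of_card_image_lt [NeZero q] (hdvd : ∀ c ∈ S, q ∣ c.2)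
    (hcard : (S.image fun c => (c.1 : ZMod q)).card < q) : ∃ r, MissesResidueClass S q r := by
  obtain ⟨z, -, hz⟩ := Finset.exists_mem_notMem_of_card_lt_card
    (s := S.image fun c => (c.1 : ZMod q)) (t := Finset.univ) (by rwa [Finset.card_univ, ZMod.card])
  obtain ⟨r, rfl⟩ := ZMod.intCast_surjective z
  refine ⟨r, fun x hxr c hc hxc => hz (Finset.mem_image.mpr ⟨c, hc, ?_⟩)⟩
  rw [ZMod.intCast_eq_intCast_iff]
  exact (hxc.of_dvd (Int.natCast_dvd_natCast.mpr (hdvd c hc))).symm.trans hxr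

lemma exists_missesResidueClass_sq (hq : 1 < q) (hdvd : ∀ c ∈ S, q ∣ c.2)
    (hcard : S.card ≤ q)
    (hsq : S.card < q ∨ ∃ c ∈ S, q ^ 2 ∣ c.2) : ∃ r, MissesResidueClass S (q ^ 2) r := by
  have : NeZero q := ⟨by omega⟩
  by_cases himage : (S.image fun c => (c.1 : ZMod q)).card < q
  · obtain ⟨r, hr⟩ := exists_missesResidueClass_of_card_image_lt hdvd himage
    exact ⟨r, hr.of_dvd (dvd_pow_self q two_ne_zero)⟩
  have hinj : Set.InjOn (fun c : ℤ × ℕ => (c.1 : ZMod q)) S :=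
    Finset.card_image_iff.mp (le_antisymm Finset.card_image_le (by omega))
  obtain ⟨c₀, hc₀, hc₀sq⟩ :=
    hsq.resolve_left fun h => himage (Finset.card_image_le.trans_lt h)
  refine ⟨c₀.1 + q, fun x hx c hc hxc => ?_⟩
  have hq_sq : (q : ℤ) ∣ ((q ^ 2 : ℕ) : ℤ) := by exact_mod_cast dvd_pow_self q two_ne_zero
  have hxq : x ≡ c₀.1 [ZMOD q] := (hx.of_dvd hq_sq).trans (Int.add_modulus_modEq_iff.mpr rfl)
  obtain rfl : c = c₀ := hinj hc hc₀ <| (ZMod.intCast_eq_intCast_iff _ _ _).mpr <|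
    (hxc.of_dvd (Int.natCast_dvd_natCast.mpr (hdvd c hc))).symm.trans hxq
  have hqq : c.1 + q ≡ c.1 [ZMOD (q ^ 2 : ℕ)] :=
    hx.symm.trans (hxc.of_dvd (Int.natCast_dvd_natCast.mpr hc₀sq))
  have hsq_dvd : q ^ 2 ∣ q := by
    have := (Int.modEq_iff_dvd.mp hqq).neg_right
    rw [neg_sub, add_sub_cancel_left] at this
    exact Int.natCast_dvd_natCast.mp this
  have := Nat.le_of_dvd (by omega) hsq_dvd
  nlinarith

lemma IsCoveringSystem.sdiff_filter_dvd {C : Finset (ℤ × ℕ)} (hC : IsCoveringSystem C)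
    (hq : q.Prime) {e : ℕ} {r : ℤ}
    (hr : MissesResidueClass (C.filter fun c => q ∣ c.2) (q ^ e) r) :
    IsCoveringSystem (C \ C.filter fun c => q ∣ c.2) := by
  refine isCoveringSystem_of_covers_residueClass (fun c hc => hC.1 c (Finset.mem_sdiff.mp hc).1)
    (M := q ^ e) (fun c hc => ?_) r fun x hx => ?_
  · obtain ⟨hcC, hcS⟩ := Finset.mem_sdiff.mp hc
    have hndvd : ¬ q ∣ c.2 := fun h => hcS (Finset.mem_filter.mpr ⟨hcC, h⟩)
    exact ((hq.coprime_iff_not_dvd.mpr hndvd).symm).pow_right e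
  · obtain ⟨c, hc, hxc⟩ := hC.2 x
    exact ⟨c, Finset.mem_sdiff.mpr ⟨hc, fun hcS => hr x hx c hcS hxc⟩, hxc⟩

end MultiplesOfPrime

section MultiplesInInterval

variable {q lo hi : ℕ} {N : Finset ℕ}

-- Distinct multiples of `q` in an interval shorter than `q²` have distinct cofactors `n / q`
-- lying in an interval shorter than `q`, so the cofactors are already distinct modulo `q`.
lemma injOn_div_mod_of_subset_Icc (hN : N ⊆ Finset.Icc lo hi) (hlen : hi < lo + q ^ 2)
    (hdvd : ∀ n ∈ N, q ∣ n) : Set.InjOn (fun n => n / q % q) N := by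
  intro n₁ h₁ n₂ h₂ hmod
  obtain ⟨k₁, rfl⟩ := hdvd n₁ h₁
  obtain ⟨k₂, rfl⟩ := hdvd n₂ h₂
  rcases Nat.eq_zero_or_pos q with rfl | hq
  · simp
  simp only [Nat.mul_div_cancel_left _ hq] at hmod
  have hI₁ := Finset.mem_Icc.mp (hN h₁)
  have hI₂ := Finset.mem_Icc.mp (hN h₂)
  have hk : |(k₂ : ℤ) - k₁| < q := by
    rw [abs_lt]
    constructor <;> nlinarith
  rw [Nat.ModEq.eq_of_abs_lt hmod hk]

lemma card_le_of_subset_Icc (hq : 0 < q) (hN : N ⊆ Finset.Icc lo hi) (hlen : hi < lo + q ^ 2)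
    (hdvd : ∀ n ∈ N, q ∣ n) : N.card ≤ q := by
  rw [← Finset.card_image_of_injOn (injOn_div_mod_of_subset_Icc hN hlen hdvd)]
  refine (Finset.card_le_card fun k hk => ?_).trans_eq (Finset.card_range q)
  obtain ⟨n, -, rfl⟩ := Finset.mem_image.mp hk
  exact Finset.mem_range.mpr (Nat.mod_lt _ hq)

lemma card_lt_of_subset_Icc (hq : 0 < q) (hN : N ⊆ Finset.Icc lo hi) (hlen : hi < lo + q ^ 2)
    (hdvd : ∀ n ∈ N, q ∣ n) (hsq : ∀ n ∈ N, ¬ q ^ 2 ∣ n) : N.card < q := by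
  rw [← Finset.card_image_of_injOn (injOn_div_mod_of_subset_Icc hN hlen hdvd)]
  refine (Finset.card_le_card fun k hk => ?_).trans_lt
    ((Finset.card_erase_lt_of_mem (Finset.mem_range.mpr hq)).trans_eq (Finset.card_range q))
  obtain ⟨n, hn, rfl⟩ := Finset.mem_image.mp hk
  refine Finset.mem_erase.mpr ⟨fun h0 => hsq n hn ?_, Finset.mem_range.mpr (Nat.mod_lt _ hq)⟩
  obtain ⟨k, rfl⟩ := hdvd n hn
  rw [Nat.mul_div_cancel_left _ hq] at h0
  exact pow_two q ▸ Nat.mul_dvd_mul_left q (Nat.dvd_of_mod_eq_zero h0)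

end MultiplesInInterval

theorem prime_divisors_small_general (m : ℕ) (C : Finset (ℤ × ℕ))
    (hC : IsDistinctCoveringSystem C)
    (hmod : ∀ c ∈ C, m ≤ c.2 ∧ c.2 ≤ 10 * m)
    (hmin : ∀ D ⊂ C, ¬ IsCoveringSystem D) :
    ∀ c ∈ C, ∀ q : ℕ, q.Prime → q ∣ c.2 → (q : ℝ) < Real.sqrt (9 * m + 1) := by
  intro c hc q hq hqc
  rw [Real.lt_sqrt (Nat.cast_nonneg q)]
  by_contra hsmall
  have hlen : 10 * m < m + q ^ 2 := by
    exact_mod_cast (by linarith [not_lt.mp hsmall] : (10 * m : ℝ) < m + q ^ 2)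
  set S := C.filter fun c => q ∣ c.2
  have hSC : S ⊆ C := Finset.filter_subset _ C
  have hSdvd : ∀ c ∈ S, q ∣ c.2 := fun c hc => (Finset.mem_filter.mp hc).2
  have hmoduli : S.image Prod.snd ⊆ Finset.Icc m (10 * m) := fun n hn => by
    obtain ⟨c, hc, rfl⟩ := Finset.mem_image.mp hn
    exact Finset.mem_Icc.mpr (hmod c (hSC hc))
  have hmoduli_dvd : ∀ n ∈ S.image Prod.snd, q ∣ n := Finset.forall_mem_image.mpr hSdvd
  have hcardS : (S.image Prod.snd).card = S.card :=
    Finset.card_image_of_injOn (hC.2.2.injOn_snd.mono (Finset.coe_subset.mpr hSC))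
  have hsq : S.card < q ∨ ∃ c ∈ S, q ^ 2 ∣ c.2 := or_iff_not_imp_right.mpr fun h =>
    hcardS ▸ card_lt_of_subset_Icc hq.pos hmoduli hlen hmoduli_dvd
      (Finset.forall_mem_image.mpr fun c hc hc_sq => h ⟨c, hc, hc_sq⟩)
  obtain ⟨r, hr⟩ := exists_missesResidueClass_sq hq.one_lt hSdvd
    (hcardS ▸ card_le_of_subset_Icc hq.pos hmoduli hlen hmoduli_dvd) hsq
  exact hmin (C \ S) (Finset.sdiff_ssubset hSC ⟨c, Finset.mem_filter.mpr ⟨hc, hqc⟩⟩)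
    (hC.1.sdiff_filter_dvd hq hr)

/-- If `C` is a minimal distinct covering system with all moduli in `[m, 10m]` for
`m ≥ 3`, then every prime divisor of every modulus of `C` is less than `√(9m + 1)`. -/
theorem prime_divisors_small (m : ℕ) (hm : 3 ≤ m) (C : Finset (ℤ × ℕ))
    (hC : IsDistinctCoveringSystem C)
    (hmod : ∀ c ∈ C, m ≤ c.2 ∧ c.2 ≤ 10 * m)
    (hmin : ∀ D ⊂ C, ¬ IsCoveringSystem D) :
    ∀ c ∈ C, ∀ q : ℕ, q.Prime → q ∣ c.2 → (q : ℝ) < Real.sqrt (9 * m + 1) :=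
  prime_divisors_small_general m C hC hmod hmin
end

section
/- Let m ≥ 3 be an integer. If there exists a distinct covering system all of whose moduli lie in the interval [m, 10m], then the sum of 1/n over all integers n with m ≤ n ≤ 10m and P(n) < √(9m + 1) is at least 1, where P(n) denotes the largest prime divisor of n (with P(1) = 1). -/
/-- `P n` is the largest prime divisor of `n`, with the convention `P 1 = 1`. -/
def maxPrimeFac (n : ℕ) : ℕ := max 1 (n.primeFactors.sup id)

open Finset

theorem Int.card_filter_modEq_Ico_zero {N n : ℕ} (hn : 0 < n) (hnN : n ∣ N) (v : ℤ) :
    #{x ∈ Ico (0 : ℤ) N | x ≡ v [ZMOD n]} = N / n := by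
  obtain ⟨k, rfl⟩ := hnN
  have h := Int.Ico_filter_modEq_card 0 (n * k : ℕ) (r := n) (by exact_mod_cast hn) v
  have hn' : (n : ℚ) ≠ 0 := by exact_mod_cast hn.ne'
  rw [show ((((n * k : ℕ) : ℤ) : ℚ) - v) / ((n : ℤ) : ℚ) = ((0 : ℤ) - v) / ((n : ℤ) : ℚ) + k by
      push_cast; field_simp; ring,
    Int.ceil_add_natCast, add_sub_cancel_left, max_eq_left (by positivity)] at h
  rw [Nat.mul_div_cancel_left k hn]
  exact_mod_cast h

theorem le_sum_div_of_forall_exists_modEq {ι : Type*} (s : Finset ι) (a : ι → ℤ) (d : ι → ℕ)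
    {N : ℕ} (hd : ∀ i ∈ s, 0 < d i ∧ d i ∣ N) (hcov : ∀ x : ℤ, ∃ i ∈ s, x ≡ a i [ZMOD d i]) :
    N ≤ ∑ i ∈ s, N / d i := by
  classical
  have hsub : Ico (0 : ℤ) N ⊆ s.biUnion fun i => {x ∈ Ico (0 : ℤ) N | x ≡ a i [ZMOD d i]} := by
    intro x hx
    obtain ⟨i, hi, hxi⟩ := hcov x
    exact mem_biUnion.mpr ⟨i, hi, mem_filter.mpr ⟨hx, hxi⟩⟩
  calc N = #(Ico (0 : ℤ) N) := by simp
    _ ≤ ∑ i ∈ s, #{x ∈ Ico (0 : ℤ) N | x ≡ a i [ZMOD d i]} :=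
      (card_le_card hsub).trans card_biUnion_le
    _ = ∑ i ∈ s, N / d i :=
      sum_congr rfl fun i hi => Int.card_filter_modEq_Ico_zero (hd i hi).1 (hd i hi).2 (a i)

theorem one_le_sum_inv_of_forall_exists_modEq_s14 (S : Finset ℕ) (a : ℕ → ℤ) (hS : ∀ n ∈ S, 0 < n)
    (hcov : ∀ x : ℤ, ∃ n ∈ S, x ≡ a n [ZMOD n]) : 1 ≤ ∑ n ∈ S, (1 : ℝ) / n := by
  set N := ∏ n ∈ S, n
  have hdvd : ∀ n ∈ S, n ∣ N := fun n hn => dvd_prod_of_mem _ hn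
  have hN : (0 : ℝ) < N := by exact_mod_cast prod_pos hS
  have hle := le_sum_div_of_forall_exists_modEq S a id (fun n hn => ⟨hS n hn, hdvd n hn⟩) hcov
  have hNsum : (N : ℝ) ≤ N * ∑ n ∈ S, (1 : ℝ) / n := by
    calc (N : ℝ) ≤ ∑ n ∈ S, ((N / n : ℕ) : ℝ) := by exact_mod_cast hle
      _ = N * ∑ n ∈ S, (1 : ℝ) / n := by
        rw [mul_sum]
        refine sum_congr rfl fun n hn => ?_
        rw [Nat.cast_div (hdvd n hn) (by exact_mod_cast (hS n hn).ne'), mul_one_div]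
  exact (le_mul_iff_one_le_right hN).mp (by simpa using hNsum)

theorem Nat.card_filter_le_count_of_periodic {P : ℕ → Prop} [DecidablePred P] {q : ℕ}
    (hP : Function.Periodic P q) {A B : ℕ} (hAB : B < A + q) {S : Finset ℕ}
    (hS : S ⊆ Icc A B) : #{n ∈ S | P n} ≤ q.count P := by
  rw [← Nat.filter_Ico_card_eq_of_periodic A q P hP]
  exact card_le_card (filter_subset_filter _ (hS.trans fun n hn => by simp at hn ⊢; omega))

theorem Nat.count_dvd_self_le_one (q : ℕ) : q.count (q ∣ ·) ≤ 1 := by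
  rw [count_eq_card_filter_range, card_le_one]
  intro n hn m hm
  simp only [mem_filter, mem_range] at hn hm
  rw [Nat.eq_zero_of_dvd_of_lt hn.2 hn.1, Nat.eq_zero_of_dvd_of_lt hm.2 hm.1]

theorem Nat.count_dvd_not_sq_dvd_le (p : ℕ) :
    (p ^ 2).count (fun n => p ∣ n ∧ ¬ p ^ 2 ∣ n) ≤ p - 1 := by
  have hsub : {n ∈ range (p ^ 2) | p ∣ n ∧ ¬ p ^ 2 ∣ n} ⊆ (Ico 1 p).image (p * ·) := by
    intro n hn
    obtain ⟨hn, ⟨k, rfl⟩, hk⟩ := by simpa only [mem_filter, mem_range] using hn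
    refine mem_image.mpr ⟨k, mem_Ico.mpr ⟨Nat.one_le_iff_ne_zero.mpr ?_, ?_⟩, rfl⟩
    · rintro rfl; simp at hk
    · rw [sq] at hn; exact Nat.lt_of_mul_lt_mul_left hn
  rw [count_eq_card_filter_range]
  calc _ ≤ _ := card_le_card hsub
    _ ≤ #(Ico 1 p) := Finset.card_image_le
    _ = p - 1 := Nat.card_Ico 1 p

theorem sum_filter_dvd_ite_sq_dvd_lt_sq {p A B : ℕ} (hp : 1 < p) (hAB : B < A + p ^ 2)
    {S : Finset ℕ} (hS : S ⊆ Icc A B) :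
    ∑ n ∈ S with p ∣ n, (if p ^ 2 ∣ n then 1 else p) < p ^ 2 := by
  have hsq : #{n ∈ S | p ∣ n ∧ p ^ 2 ∣ n} ≤ 1 :=
    calc _ ≤ #{n ∈ S | p ^ 2 ∣ n} := card_le_card (monotone_filter_right _ fun _ _ => And.right)
      _ ≤ (p ^ 2).count (p ^ 2 ∣ ·) :=
          Nat.card_filter_le_count_of_periodic (fun n => by simp) hAB hS
      _ ≤ 1 := Nat.count_dvd_self_le_one _
  have hsimple : #{n ∈ S | p ∣ n ∧ ¬ p ^ 2 ∣ n} ≤ p - 1 :=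
    calc _ ≤ (p ^ 2).count (fun n => p ∣ n ∧ ¬ p ^ 2 ∣ n) :=
          Nat.card_filter_le_count_of_periodic (fun n => by
            simp [Nat.dvd_add_left (dvd_pow_self p two_ne_zero)]) hAB hS
      _ ≤ p - 1 := Nat.count_dvd_not_sq_dvd_le p
  rw [sum_ite, sum_const, sum_const, smul_eq_mul, smul_eq_mul, mul_one, filter_filter,
    filter_filter]
  zify [hp.le] at hsimple ⊢
  nlinarith

theorem exists_forall_not_modEq_add_sq_mul {p A B : ℕ} (hp : 1 < p) (hAB : B < A + p ^ 2)
    {S : Finset ℕ} (hS : S ⊆ Icc A B) (a : ℕ → ℤ) :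
    ∃ r : ℤ, ∀ n ∈ S, p ∣ n → ∀ t : ℤ, ¬ r + p ^ 2 * t ≡ a n [ZMOD n] := by
  by_contra! h
  -- For `p ∣ n`, `d n = gcd n p²`: a solution of `x + p² t ≡ a n [ZMOD n]` fixes `x` mod `d n`.
  let d : ℕ → ℕ := fun n => if p ^ 2 ∣ n then p ^ 2 else p
  have hdp : ∀ n, d n ∣ p ^ 2 := fun n => by
    by_cases hn : p ^ 2 ∣ n <;> simp [d, hn, dvd_pow_self p two_ne_zero]
  have hdn : ∀ n, p ∣ n → d n ∣ n := fun n hpn => by by_cases hn : p ^ 2 ∣ n <;> simp [d, hn, hpn]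
  have hcov : ∀ x : ℤ, ∃ n ∈ S.filter (p ∣ ·), x ≡ a n [ZMOD d n] := fun x => by
    obtain ⟨n, hn, hpn, t, ht⟩ := h x
    refine ⟨n, mem_filter.mpr ⟨hn, hpn⟩, ?_⟩
    have hx : x + p ^ 2 * t ≡ x [ZMOD d n] :=
      Int.add_modEq_left_iff.mpr (dvd_mul_of_dvd_left (by exact_mod_cast hdp n) t)
    exact hx.symm.trans (ht.of_dvd (by exact_mod_cast hdn n hpn))
  have hpos : ∀ n, 0 < d n := fun n => by
    by_cases hn : p ^ 2 ∣ n <;> simp only [d, hn, if_true, if_false] <;> positivity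
  have hle := le_sum_div_of_forall_exists_modEq _ a d (N := p ^ 2)
    (fun n _ => ⟨hpos n, hdp n⟩) hcov
  have hdiv : ∀ n, p ^ 2 / d n = if p ^ 2 ∣ n then 1 else p := fun n => by
    by_cases hn : p ^ 2 ∣ n <;> simp only [d, hn, if_true, if_false]
    · exact Nat.div_self (by positivity)
    · rw [sq, Nat.mul_div_cancel _ (by omega)]
  simp only [hdiv] at hle
  exact hle.not_gt (sum_filter_dvd_ite_sq_dvd_lt_sq hp hAB hS)

theorem forall_exists_modEq_of_forall_exists_modEq_add_mul {S : Finset ℕ} {a : ℕ → ℤ} {q : ℕ}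
    {r : ℤ} (hS : ∀ n ∈ S, q.Coprime n) (hcov : ∀ t : ℤ, ∃ n ∈ S, r + q * t ≡ a n [ZMOD n]) :
    ∀ t : ℤ, ∃ n ∈ S, t ≡ (a n - r) * Nat.gcdA q n [ZMOD n] := fun t => by
  obtain ⟨n, hn, hmod⟩ := hcov t
  have hbezout : (1 : ℤ) = q * Nat.gcdA q n + n * Nat.gcdB q n := by
    rw [← Nat.gcd_eq_gcd_ab, hS n hn, Nat.cast_one]
  obtain ⟨w, hw⟩ := hmod.dvd
  refine ⟨n, hn, Int.modEq_iff_dvd.mpr ⟨w * Nat.gcdA q n - t * Nat.gcdB q n, ?_⟩⟩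
  linear_combination Nat.gcdA q n * hw - t * hbezout

theorem maxPrimeFac_mem_primeFactors {n : ℕ} (hn : 1 < n) : maxPrimeFac n ∈ n.primeFactors := by
  obtain ⟨p, hp, hsup⟩ := exists_mem_eq_sup _ (Nat.nonempty_primeFactors.mpr hn) id
  rwa [maxPrimeFac, hsup, id, max_eq_right (Nat.prime_of_mem_primeFactors hp).one_lt.le]

theorem one_le_sum_inv_smooth_of_forall_exists_modEq {A B : ℕ} (S : Finset ℕ) (a : ℕ → ℤ)
    (hS : ∀ n ∈ S, 1 < n) (hSAB : S ⊆ Icc A B) (hcov : ∀ x : ℤ, ∃ n ∈ S, x ≡ a n [ZMOD n]) :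
    1 ≤ ∑ n ∈ Icc A B with A + maxPrimeFac n ^ 2 ≤ B, (1 : ℝ) / n := by
  induction S using Finset.strongInduction generalizing a with
  | H S ih =>
    by_cases hsmooth : ∀ n ∈ S, A + maxPrimeFac n ^ 2 ≤ B
    · calc 1 ≤ ∑ n ∈ S, (1 : ℝ) / n :=
            one_le_sum_inv_of_forall_exists_modEq_s14 S a (fun n hn => (hS n hn).pos) hcov
        _ ≤ _ := sum_le_sum_of_subset_of_nonneg (fun n hn => mem_filter.mpr ⟨hSAB hn, hsmooth n hn⟩)
            fun _ _ _ => by positivity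
    push Not at hsmooth
    obtain ⟨n₀, hn₀, hlarge⟩ := hsmooth
    have hp := maxPrimeFac_mem_primeFactors (hS n₀ hn₀)
    set p := maxPrimeFac n₀
    have hp_prime := Nat.prime_of_mem_primeFactors hp
    obtain ⟨r, hr⟩ := exists_forall_not_modEq_add_sq_mul hp_prime.one_lt hlarge hSAB a
    have hcov' : ∀ t : ℤ, ∃ n ∈ S.filter (¬ p ∣ ·), r + (p ^ 2 : ℕ) * t ≡ a n [ZMOD n] := by
      intro t
      obtain ⟨n, hn, hmod⟩ := hcov (r + (p ^ 2 : ℕ) * t)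
      exact ⟨n, mem_filter.mpr ⟨hn, fun hpn => hr n hn hpn t (by exact_mod_cast hmod)⟩, hmod⟩
    refine ih _ (filter_ssubset.mpr ⟨n₀, hn₀, not_not.mpr (Nat.dvd_of_mem_primeFactors hp)⟩) _
      (fun n hn => hS n (mem_filter.mp hn).1) ((filter_subset _ _).trans hSAB)
      (forall_exists_modEq_of_forall_exists_modEq_add_mul (fun n hn => ?_) hcov')
    exact Nat.Coprime.pow_left 2 (hp_prime.coprime_iff_not_dvd.mpr (mem_filter.mp hn).2)

theorem HasDistinctModuli.exists_residue_of_modulus {C : Finset (ℤ × ℕ)}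
    (hC : HasDistinctModuli C) :
    ∃ a : ℕ → ℤ, ∀ c ∈ C, a c.2 = c.1 := by
  have hinj : Set.InjOn Prod.snd (C : Set (ℤ × ℕ)) := fun c hc c' hc' h =>
    by_contra fun hne => hC c hc c' hc' hne h
  exact ⟨fun n => (Function.invFunOn Prod.snd (C : Set (ℤ × ℕ)) n).1,
    fun c hc => congrArg Prod.fst (hinj.leftInvOn_invFunOn hc)⟩

open scoped Classical in
theorem reciprocal_sum_ge_one_general (m : ℕ)
    (h : ∃ C : Finset (ℤ × ℕ), IsDistinctCoveringSystem C ∧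
      ∀ c ∈ C, m ≤ c.2 ∧ c.2 ≤ 10 * m) :
    1 ≤ ∑ n ∈ (Finset.Icc m (10 * m)).filter
        (fun n => (maxPrimeFac n : ℝ) < Real.sqrt (9 * (m : ℝ) + 1)), (1 : ℝ) / n := by
  obtain ⟨C, ⟨⟨-, hcov⟩, hC1, hdist⟩, hCm⟩ := h
  obtain ⟨a, ha⟩ := hdist.exists_residue_of_modulus
  have hsmooth : ∀ n ∈ Icc m (10 * m),
      (maxPrimeFac n : ℝ) < Real.sqrt (9 * (m : ℝ) + 1) ↔ m + maxPrimeFac n ^ 2 ≤ 10 * m :=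
    fun n _ => by rw [Real.lt_sqrt (Nat.cast_nonneg _)]; norm_cast; omega
  rw [filter_congr hsmooth]
  refine one_le_sum_inv_smooth_of_forall_exists_modEq (C.image Prod.snd) a ?_ ?_ fun x => ?_
  · simpa using fun n c hc => hC1 (c, n) hc
  · intro n hn
    obtain ⟨c, hc, rfl⟩ := mem_image.mp hn
    exact mem_Icc.mpr (hCm c hc)
  · obtain ⟨c, hc, hx⟩ := hcov x
    exact ⟨c.2, mem_image_of_mem _ hc, ha c hc ▸ hx⟩

open scoped Classical in
/-- If there exists a distinct covering system all of whose moduli lie in `[m, 10m]`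
(for `m ≥ 3`), then the sum of `1/n` over `m ≤ n ≤ 10m` with `P(n) < √(9m + 1)`
is at least `1`. -/
theorem reciprocal_sum_ge_one (m : ℕ) (hm : 3 ≤ m)
    (h : ∃ C : Finset (ℤ × ℕ), IsDistinctCoveringSystem C ∧
      ∀ c ∈ C, m ≤ c.2 ∧ c.2 ≤ 10 * m) :
    1 ≤ ∑ n ∈ (Finset.Icc m (10 * m)).filter
        (fun n => (maxPrimeFac n : ℝ) < Real.sqrt (9 * (m : ℝ) + 1)), (1 : ℝ) / n :=
  reciprocal_sum_ge_one_general m h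
end
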